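/- For real numbers a > b ≥ c > d > 0, L(a,b)/L(c,d) > ln(G(a,b)/G(c,d)) / ln(I(a,b)/I(c,d)), where L, G, I are the logarithmic, geometric, and identric means. -/

import Mathlib

noncomputable def logMean (x y : ℝ) : ℝ :=
  if x = y then x else (x - y) / (Real.log x - Real.log y)

noncomputable def geomMean (x y : ℝ) : ℝ := Real.sqrt (x * y)

noncomputable def identricMean (x y : ℝ) : ℝ :=
  if x = y then x else (1 / Real.exp 1) * (x ^ x / y ^ y) ^ (1 / (x - y))

/-!
The identity `log I = log G + A / L - 1` (with `A` the arithmetic mean) turns the denominator into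
`g + A(a,b) / L(a,b) - A(c,d) / L(c,d)`, where `g = log (G(a,b) / G(c,d))`. Cross-multiplied, the
inequality becomes polynomial in `L₁ = L(a,b)`, `L₂ = L(c,d)` and `g`, and it follows from the
classical chain `H < L < A` for the logarithmic mean (so `d < L₂ < c ≤ b < L₁`) together with
`g ≥ (log c - log d) / 2 = (c - d) / (2 L₂)`.
-/

open Real

lemma two_mul_log_lt_sub_inv {t : ℝ} (ht : 1 < t) : 2 * log t < t - t⁻¹ := by
  have h := self_lt_sinh_iff.2 (log_pos ht)
  rw [sinh_log (by linarith)] at h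
  linarith

lemma two_mul_div_add_one_lt_log {t : ℝ} (ht : 1 < t) : 2 * (t - 1) / (t + 1) < log t := by
  set u := (t - 1) / (t + 1) with hu
  have hu0 : 0 < u := div_pos (by linarith) (by linarith)
  have hu1 : u < 1 := (div_lt_one (by linarith)).2 (by linarith)
  have hlog : log (1 + u) - log (1 - u) = log t := by
    rw [← log_div (by linarith) (by linarith), hu]
    congr 1
    field_simp
    ring
  -- `log t = 2 (u + u³/3 + u⁵/5 + ⋯)`, and the tail beyond `2 u` is positive
  have hsum := hasSum_log_sub_log_of_abs_lt_one (abs_lt.2 ⟨by linarith, hu1⟩)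
  have h := sum_le_hasSum (Finset.range 2) (fun k _ => by positivity) hsum
  norm_num [Finset.sum_range_succ, hlog] at h
  rw [mul_div_assoc]
  nlinarith [pow_pos hu0 3]

section LogMean

variable {x y : ℝ}

lemma logMean_of_ne (h : x ≠ y) : logMean x y = (x - y) / (log x - log y) := if_neg h

lemma logMean_mul_log_sub_log (hx : 0 < x) (hy : 0 < y) (h : x ≠ y) :
    logMean x y * (log x - log y) = x - y := by
  rw [logMean_of_ne h]
  exact div_mul_cancel₀ _ (sub_ne_zero.2 fun e => h (log_injOn_pos hx hy e))

lemma harmMean_lt_logMean (hy : 0 < y) (hxy : y < x) : 2 * x * y / (x + y) < logMean x y := by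
  have hx : 0 < x := hy.trans hxy
  have hℓ : 0 < log x - log y := sub_pos.2 (log_lt_log hy hxy)
  have h := two_mul_log_lt_sub_inv ((one_lt_div hy).2 hxy)
  rw [log_div hx.ne' hy.ne', inv_div, div_sub_div _ _ hy.ne' hx.ne',
    lt_div_iff₀ (by positivity)] at h
  rw [logMean_of_ne hxy.ne', div_lt_div_iff₀ (by linarith) hℓ]
  nlinarith

lemma logMean_lt_arithMean (hy : 0 < y) (hxy : y < x) : logMean x y < (x + y) / 2 := by
  have hx : 0 < x := hy.trans hxy
  have hℓ : 0 < log x - log y := sub_pos.2 (log_lt_log hy hxy)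
  have h := two_mul_div_add_one_lt_log ((one_lt_div hy).2 hxy)
  rw [log_div hx.ne' hy.ne', div_sub_one hy.ne', div_add_one hy.ne', mul_div_assoc,
    div_div_div_cancel_right₀ hy.ne'] at h
  rw [logMean_of_ne hxy.ne', div_lt_div_iff₀ hℓ two_pos]
  rw [mul_div_assoc', div_lt_iff₀ (by linarith)] at h
  nlinarith

lemma lt_logMean (hy : 0 < y) (hxy : y < x) : y < logMean x y := by
  refine lt_of_le_of_lt ?_ (harmMean_lt_logMean hy hxy)
  rw [le_div_iff₀ (by linarith)]
  nlinarith

lemma logMean_lt (hy : 0 < y) (hxy : y < x) : logMean x y < x := by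
  linarith [logMean_lt_arithMean hy hxy]

lemma geomMean_pos (hx : 0 < x) (hy : 0 < y) : 0 < geomMean x y :=
  sqrt_pos.2 (mul_pos hx hy)

lemma log_geomMean (hx : 0 < x) (hy : 0 < y) : log (geomMean x y) = (log x + log y) / 2 := by
  rw [geomMean, log_sqrt (mul_pos hx hy).le, log_mul hx.ne' hy.ne']

lemma identricMean_pos (hx : 0 < x) (hy : 0 < y) : 0 < identricMean x y := by
  unfold identricMean
  split_ifs
  · exact hx
  · positivity

lemma log_identricMean (hx : 0 < x) (hy : 0 < y) (h : x ≠ y) :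
    log (identricMean x y) = log (geomMean x y) + (x + y) / 2 / logMean x y - 1 := by
  have hpow : 0 < x ^ x / y ^ y := by positivity
  have hxy : x - y ≠ 0 := sub_ne_zero.2 h
  have hℓ : log x - log y ≠ 0 := sub_ne_zero.2 fun e => h (log_injOn_pos hx hy e)
  rw [identricMean, if_neg h, log_mul (by positivity) (rpow_pos_of_pos hpow _).ne', one_div,
    log_inv, log_exp, log_rpow hpow, log_div (by positivity) (by positivity), log_rpow hx,
    log_rpow hy, log_geomMean hx hy, logMean_of_ne h]
  field_simp
  ring


lemma log_geomMean_div {z w : ℝ} (hx : 0 < x) (hy : 0 < y) (hz : 0 < z) (hw : 0 < w) :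
    log (geomMean x y / geomMean z w) = (log x + log y) / 2 - (log z + log w) / 2 := by
  rw [log_div (geomMean_pos hx hy).ne' (geomMean_pos hz hw).ne', log_geomMean hx hy,
    log_geomMean hz hw]

lemma log_identricMean_div {z w : ℝ} (hx : 0 < x) (hy : 0 < y) (hz : 0 < z) (hw : 0 < w)
    (hxy : x ≠ y) (hzw : z ≠ w) :
    log (identricMean x y / identricMean z w) = log (geomMean x y / geomMean z w)
      + (x + y) / 2 / logMean x y - (z + w) / 2 / logMean z w := by
  rw [log_div (identricMean_pos hx hy).ne' (identricMean_pos hz hw).ne',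
    log_identricMean hx hy hxy, log_identricMean hz hw hzw,
    log_div (geomMean_pos hx hy).ne' (geomMean_pos hz hw).ne']
  ring

end LogMean

lemma mul_lt_mul_add_div_sub_div {a b c d L₁ L₂ g : ℝ} (hd : 0 < d) (hc : 0 < c)
    (hcab : 2 * c ≤ a + b) (hL₁ : L₁ < (a + b) / 2) (hL₂ : 2 * c * d / (c + d) < L₂) (hdL₂ : d < L₂)
    (hL₂₁ : L₂ < L₁) (hg : c - d ≤ 2 * g * L₂) :
    g * L₂ < L₁ * (g + (a + b) / 2 / L₁ - (c + d) / 2 / L₂) := by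
  have hL₂0 : 0 < L₂ := hd.trans hdL₂
  have hL₁0 : 0 < L₁ := hL₂0.trans hL₂₁
  rw [div_lt_iff₀ (by linarith)] at hL₂
  -- `L₂ g ≥ (c - d) / 2` and `L₁ < (a + b) / 2` reduce this to `(L₂ - d)(a + b) > L₂ (c - d)`,
  -- which follows from `a + b ≥ 2 c` and `L₂ (c + d) > 2 c d`
  have key : 0 < (L₁ - L₂) * L₂ * g + (a + b) / 2 * L₂ - (c + d) / 2 * L₁ := by
    nlinarith [mul_le_mul_of_nonneg_left hg (sub_pos.2 hL₂₁).le,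
      mul_pos hd (by linarith : 0 < a + b - 2 * L₁),
      mul_nonneg (sub_pos.2 hdL₂).le (sub_nonneg.2 hcab)]
  have hexp : L₁ * (g + (a + b) / 2 / L₁ - (c + d) / 2 / L₂) - g * L₂
      = ((L₁ - L₂) * L₂ * g + (a + b) / 2 * L₂ - (c + d) / 2 * L₁) / L₂ := by
    field_simp
    ring
  linarith [div_pos key hL₂0]

theorem stmt12 (a b c d : ℝ) (hab : a > b) (hbc : b ≥ c) (hcd : c > d) (hd : d > 0) :
    logMean a b / logMean c d >
      Real.log (geomMean a b / geomMean c d) /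
        Real.log (identricMean a b / identricMean c d) := by
  have hc : 0 < c := hd.trans hcd
  have hb : 0 < b := hc.trans_le hbc
  have ha : 0 < a := hb.trans hab
  have hI := log_identricMean_div ha hb hc hd hab.ne' hcd.ne'
  have hg : log c - log d ≤ 2 * log (geomMean a b / geomMean c d) := by
    rw [log_geomMean_div ha hb hc hd]
    linarith [log_lt_log hb hab, log_le_log hc hbc]
  have hL₂ : 0 < logMean c d := hd.trans (lt_logMean hd hcd)
  have hgL₂ : c - d ≤ 2 * log (geomMean a b / geomMean c d) * logMean c d := by
    rw [← logMean_mul_log_sub_log hc hd hcd.ne']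
    linarith [mul_le_mul_of_nonneg_right hg hL₂.le]
  have hcross := mul_lt_mul_add_div_sub_div hd hc (by linarith) (logMean_lt_arithMean hb hab)
    (harmMean_lt_logMean hd hcd) (lt_logMean hd hcd)
    ((logMean_lt hd hcd).trans_le hbc |>.trans (lt_logMean hb hab)) hgL₂
  rw [← hI] at hcross
  have hN : 0 < log (identricMean a b / identricMean c d) :=
    pos_of_mul_pos_right ((mul_pos (by linarith [log_lt_log hd hcd]) hL₂).trans hcross)
      (hb.trans (lt_logMean hb hab)).le
  rw [gt_iff_lt, div_lt_div_iff₀ hN hL₂]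
  exact hcross
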